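/- Let (Ω, F, P) be a probability space with filtration (F_t)_{t≥0}, and let (α_t)_{t≥1} be an adapted sequence of random variables with 0 ≤ α_t ≤ 1 almost surely for all t. Then the process S_n = exp((1 - 1/e)·Σ_{t=1}^n E[α_t | F_{t-1}] − Σ_{t=1}^n α_t), with S_0 = 1, is a nonnegative supermartingale. -/

import Mathlib

open MeasureTheory Finset

lemma exp_neg_le_aux {x : ℝ} (hx0 : 0 ≤ x) (hx1 : x ≤ 1) :
    Real.exp (-x) ≤ 1 - (1 - 1 / Real.exp 1) * x := by
  have h := convexOn_exp.2 (Set.mem_univ (-1 : ℝ)) (Set.mem_univ (0 : ℝ)) hx0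
    (by linarith : (0:ℝ) ≤ 1 - x) (by ring)
  simp only [smul_eq_mul, mul_zero, add_zero, mul_neg, mul_one, Real.exp_zero] at h
  rw [Real.exp_neg, Real.exp_neg] at *
  have he : (Real.exp 1)⁻¹ = 1 / Real.exp 1 := by rw [one_div]
  nlinarith [h]

/-- The exponential process associated with a `[0,1]`-bounded adapted sequence is a
nonnegative supermartingale. -/
theorem exp_process_supermartingale {Ω : Type*} {m : MeasurableSpace Ω}
    (μ : Measure Ω) [IsProbabilityMeasure μ] (F : Filtration ℕ m)
    (α : ℕ → Ω → ℝ)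
    (hadapt : ∀ t, 1 ≤ t → StronglyMeasurable[F t] (α t))
    (hbdd : ∀ t, 1 ≤ t → ∀ᵐ ω ∂μ, α t ω ∈ Set.Icc (0 : ℝ) 1)
    (S : ℕ → Ω → ℝ)
    (hS : ∀ n ω, S n ω =
      Real.exp ((1 - 1 / Real.exp 1) * (∑ t ∈ Finset.Icc 1 n, (μ[α t|F (t - 1)]) ω)
        - ∑ t ∈ Finset.Icc 1 n, α t ω)) :
    Supermartingale S F μ ∧ ∀ n ω, 0 ≤ S n ω := by
  set c : ℝ := 1 - 1 / Real.exp 1 with hc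
  have he1 : (1 : ℝ) ≤ Real.exp 1 := by
    have := Real.add_one_le_exp (1 : ℝ); linarith
  have hepos : (0 : ℝ) < Real.exp 1 := Real.exp_pos 1
  have hc0 : 0 ≤ c := by
    have : 1 / Real.exp 1 ≤ 1 := by
      rw [div_le_one hepos]; exact he1
    rw [hc]; linarith
  have hc1 : c ≤ 1 := by
    have : 0 < 1 / Real.exp 1 := by positivity
    rw [hc]; linarith
  -- basic measurability/integrability facts
  have hαm : ∀ t, 1 ≤ t → StronglyMeasurable (α t) := fun t ht =>
    (hadapt t ht).mono (F.le t)
  have hαint : ∀ t, 1 ≤ t → Integrable (α t) μ := by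
    intro t ht
    refine (integrable_const (1 : ℝ)).mono' (hαm t ht).aestronglyMeasurable ?_
    filter_upwards [hbdd t ht] with ω hω
    rw [Real.norm_eq_abs, abs_le]; exact ⟨by linarith [hω.1], hω.2⟩
  have hEnn : ∀ t, 1 ≤ t → 0 ≤ᵐ[μ] μ[α t|F (t - 1)] := fun t ht =>
    condExp_nonneg ((hbdd t ht).mono fun ω hω => hω.1)
  have hEle : ∀ t, 1 ≤ t → μ[α t|F (t - 1)] ≤ᵐ[μ] fun _ => (1 : ℝ) := by
    intro t ht
    have h := condExp_mono (m := F (t - 1)) (hαint t ht) (integrable_const 1)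
      ((hbdd t ht).mono fun ω hω => hω.2)
    rwa [condExp_const (F.le (t - 1)) (1 : ℝ)] at h
  -- strong measurability of S n wrt F n
  have hSmeas : ∀ n, StronglyMeasurable[F n] (S n) := by
    intro n
    have hfun : S n = fun ω =>
        Real.exp (c * (∑ t ∈ Finset.Icc 1 n, (μ[α t|F (t - 1)]) ω)
          - ∑ t ∈ Finset.Icc 1 n, α t ω) := funext (hS n)
    rw [hfun]
    refine Real.continuous_exp.comp_stronglyMeasurable ?_
    refine StronglyMeasurable.sub ?_ ?_
    · refine StronglyMeasurable.const_mul ?_ c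
      refine Finset.stronglyMeasurable_fun_sum _ fun t ht' => ?_
      have ht := (Finset.mem_Icc.mp ht').1
      have htn := (Finset.mem_Icc.mp ht').2
      exact stronglyMeasurable_condExp.mono (F.mono (le_trans (Nat.sub_le t 1) htn))
    · refine Finset.stronglyMeasurable_fun_sum _ fun t ht' => ?_
      have ht := (Finset.mem_Icc.mp ht').1
      have htn := (Finset.mem_Icc.mp ht').2
      exact (hadapt t ht).mono (F.mono htn)
  have hSpos : ∀ n ω, 0 ≤ S n ω := fun n ω => by
    rw [hS n ω]; exact (Real.exp_pos _).le
  -- a.e. bound on S n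
  have hSbound : ∀ n, ∀ᵐ ω ∂μ, S n ω ≤ Real.exp (c * n) := by
    intro n
    have hall : ∀ᵐ ω ∂μ, ∀ t ∈ Finset.Icc 1 n,
        (μ[α t|F (t - 1)]) ω ≤ 1 ∧ 0 ≤ α t ω := by
      rw [Filter.eventually_all_finset]
      intro t ht'
      have ht := (Finset.mem_Icc.mp ht').1
      filter_upwards [hEle t ht, hbdd t ht] with ω h1 h2 using ⟨h1, h2.1⟩
    filter_upwards [hall] with ω hω
    rw [hS n ω]
    apply Real.exp_le_exp.mpr
    have h1 : ∑ t ∈ Finset.Icc 1 n, (μ[α t|F (t - 1)]) ω ≤ n := by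
      calc ∑ t ∈ Finset.Icc 1 n, (μ[α t|F (t - 1)]) ω
          ≤ ∑ t ∈ Finset.Icc 1 n, (1 : ℝ) :=
            Finset.sum_le_sum fun t ht => (hω t ht).1
        _ = ((Finset.Icc 1 n).card : ℝ) := by simp
        _ ≤ n := by
            rw [Nat.card_Icc]; simp
    have h2 : 0 ≤ ∑ t ∈ Finset.Icc 1 n, α t ω :=
      Finset.sum_nonneg fun t ht => (hω t ht).2
    nlinarith
  have hSint : ∀ n, Integrable (S n) μ := by
    intro n
    refine (integrable_const (Real.exp (c * n))).mono'
      ((hSmeas n).mono (F.le n)).aestronglyMeasurable ?_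
    filter_upwards [hSbound n] with ω hω
    rw [Real.norm_eq_abs, abs_of_nonneg (hSpos n ω)]; exact hω
  -- key supermartingale step
  have key : ∀ n, μ[S (n + 1)|F n] ≤ᵐ[μ] S n := by
    intro n
    have ht1 : 1 ≤ n + 1 := Nat.le_add_left 1 n
    set E : Ω → ℝ := μ[α (n + 1)|F n] with hE
    have hn1 : (n + 1) - 1 = n := Nat.succ_sub_one n
    -- decomposition of S (n+1)
    have hsplit : S (n + 1) = (fun ω => S n ω * Real.exp (c * E ω)) *
        fun ω => Real.exp (-(α (n + 1) ω)) := by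
      funext ω
      rw [Pi.mul_apply, hS (n + 1) ω, hS n ω,
        Finset.sum_Icc_succ_top ht1 (fun t => (μ[α t|F (t - 1)]) ω),
        Finset.sum_Icc_succ_top ht1 (fun t => α t ω),
        ← Real.exp_add, ← Real.exp_add, hn1]
      congr 1
      ring
    set g : Ω → ℝ := fun ω => S n ω * Real.exp (c * E ω) with hg
    have hgmeas : StronglyMeasurable[F n] g := by
      refine (hSmeas n).mul ?_
      exact Real.continuous_exp.comp_stronglyMeasurable
        ((stronglyMeasurable_condExp : StronglyMeasurable[F n] E).const_mul c)
    have hgnn : ∀ ω, 0 ≤ g ω := fun ω =>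
      mul_nonneg (hSpos n ω) (Real.exp_pos _).le
    have hEc : E = μ[α (n + 1)|F ((n + 1) - 1)] := by rw [hn1]
    have hgbdd : ∀ᵐ ω ∂μ, g ω ≤ Real.exp (c * n) * Real.exp c := by
      filter_upwards [hSbound n, hEc ▸ hEle (n + 1) ht1, hEc ▸ hEnn (n + 1) ht1]
        with ω h1 h2 h3
      have : Real.exp (c * E ω) ≤ Real.exp c := by
        apply Real.exp_le_exp.mpr
        nlinarith
      exact mul_le_mul h1 this (Real.exp_pos _).le (Real.exp_pos _).le
    have hhbdd : ∀ᵐ ω ∂μ, Real.exp (-(α (n + 1) ω)) ≤ 1 := by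
      filter_upwards [hbdd (n + 1) ht1] with ω hω
      rw [← Real.exp_zero]
      exact Real.exp_le_exp.mpr (by linarith [hω.1])
    have hhint : Integrable (fun ω => Real.exp (-(α (n + 1) ω))) μ := by
      refine (integrable_const (1 : ℝ)).mono'
        (Real.continuous_exp.comp_aestronglyMeasurable
          (hαm (n + 1) ht1).aestronglyMeasurable.neg) ?_
      filter_upwards [hhbdd] with ω hω
      rw [Real.norm_eq_abs, abs_of_nonneg (Real.exp_pos _).le]; exact hω
    have hghint : Integrable (g * fun ω => Real.exp (-(α (n + 1) ω))) μ := by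
      rw [← hsplit]; exact hSint (n + 1)
    -- pull-out property
    have hpull : μ[S (n + 1)|F n] =ᵐ[μ] g * μ[fun ω => Real.exp (-(α (n + 1) ω))|F n] := by
      rw [hsplit]
      exact condExp_mul_of_stronglyMeasurable_left hgmeas hghint hhint
    -- comparison with 1 - c * α
    have hint2 : Integrable (fun ω => 1 - c * α (n + 1) ω) μ :=
      (integrable_const (1 : ℝ)).sub ((hαint (n + 1) ht1).const_mul c)
    have hcomp : μ[fun ω => Real.exp (-(α (n + 1) ω))|F n] ≤ᵐ[μ]
        μ[fun ω => 1 - c * α (n + 1) ω|F n] := by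
      refine condExp_mono hhint hint2 ?_
      filter_upwards [hbdd (n + 1) ht1] with ω hω
      exact exp_neg_le_aux hω.1 hω.2
    have hlin : μ[fun ω => 1 - c * α (n + 1) ω|F n] =ᵐ[μ] fun ω => 1 - c * E ω := by
      have h1 : (fun ω => 1 - c * α (n + 1) ω) =
          (fun _ => (1 : ℝ)) - c • α (n + 1) := by
        funext ω; simp [smul_eq_mul]
      rw [h1]
      calc μ[(fun _ => (1:ℝ)) - c • α (n + 1)|F n]
          =ᵐ[μ] μ[(fun _ => (1:ℝ))|F n] - μ[c • α (n + 1)|F n] :=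
            condExp_sub (m := F n) (integrable_const 1) ((hαint (n + 1) ht1).smul c)
        _ =ᵐ[μ] fun ω => 1 - c * E ω := by
            have h2 := condExp_smul (μ := μ) (m := F n) c (α (n + 1))
            rw [condExp_const (F.le n) (1 : ℝ)]
            filter_upwards [h2] with ω hω
            simp only [Pi.sub_apply, hω, Pi.smul_apply, smul_eq_mul]
            rfl
    -- combine
    refine hpull.trans_le ?_
    have step1 : g * μ[fun ω => Real.exp (-(α (n + 1) ω))|F n] ≤ᵐ[μ]
        fun ω => g ω * (1 - c * E ω) := by
      filter_upwards [hcomp, hlin] with ω h1 h2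
      simp only [Pi.mul_apply]
      calc g ω * (μ[fun ω => Real.exp (-(α (n + 1) ω))|F n]) ω
          ≤ g ω * (μ[fun ω => 1 - c * α (n + 1) ω|F n]) ω :=
            mul_le_mul_of_nonneg_left h1 (hgnn ω)
        _ = g ω * (1 - c * E ω) := by rw [h2]
    refine step1.trans ?_
    refine Filter.Eventually.of_forall fun ω => ?_
    have h3 : 1 - c * E ω ≤ Real.exp (-(c * E ω)) := by
      have := Real.add_one_le_exp (-(c * E ω)); linarith
    calc g ω * (1 - c * E ω) ≤ g ω * Real.exp (-(c * E ω)) :=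
          mul_le_mul_of_nonneg_left h3 (hgnn ω)
      _ = S n ω * (Real.exp (c * E ω) * Real.exp (-(c * E ω))) := by rw [hg]; ring
      _ = S n ω := by rw [← Real.exp_add, add_neg_cancel, Real.exp_zero, mul_one]
  exact ⟨supermartingale_nat hSmeas hSint key, hSpos⟩
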